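/- arXiv:1204.5393 — 3 statements merged into one kernel-verified Lean document; each statement's English description precedes it below -/
import Mathlib

section
/- Let x be a uniformly recurrent sequence over a finite alphabet and let u, v be prefixes of x with u a prefix of v. Then every return word to v in x is a concatenation of return words to u, i.e., belongs to the submonoid generated by the return words to u. -/
/-- The factor of the sequence `x` starting at position `i` of length `n`. -/
def seqWord {A : Type*} (x : ℕ → A) (i n : ℕ) : List A :=
  (List.range n).map (fun k => x (i + k))

/-- The word `u` occurs in the sequence `x` at position `i`. -/
def occursAt {A : Type*} (x : ℕ → A) (u : List A) (i : ℕ) : Prop :=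
  seqWord x i u.length = u

/-- `u` is a factor of the sequence `x`. -/
def IsFactor {A : Type*} (x : ℕ → A) (u : List A) : Prop :=
  ∃ i, occursAt x u i

/-- `u` is a prefix of the sequence `x`. -/
def IsPrefixSeq {A : Type*} (u : List A) (x : ℕ → A) : Prop :=
  occursAt x u 0

/-- `x` is uniformly recurrent: every factor occurs in every sufficiently long window. -/
def UnifRec {A : Type*} (x : ℕ → A) : Prop :=
  ∀ u : List A, IsFactor x u → ∃ C, ∀ i, ∃ j, i ≤ j ∧ j < i + C ∧ occursAt x u j

/-- `w` is a return word to `u` in `x`: the factor between two consecutive occurrences of `u`. -/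
def IsReturnWord {A : Type*} (x : ℕ → A) (u w : List A) : Prop :=
  ∃ i j, i < j ∧ occursAt x u i ∧ occursAt x u j ∧
    (∀ k, i < k → k < j → ¬ occursAt x u k) ∧ w = seqWord x i (j - i)

/-- Apply a morphism (given on letters) to a word, by concatenation. -/
def morphApply {I A : Type*} (θ : I → List A) (l : List I) : List A :=
  (l.map θ).flatten

/-- Iterate an endomorphism `σ` of the free monoid `n` times on a word. -/
def morphIter {A : Type*} (σ : A → List A) : ℕ → List A → List A
  | 0, l => l
  | n + 1, l => morphApply σ (morphIter σ n l)

/-- `x` is ultimately periodic. -/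
def UltPeriodic {A : Type*} (x : ℕ → A) : Prop :=
  ∃ p > 0, ∃ N, ∀ n ≥ N, x (n + p) = x n

/-- `x` is linearly recurrent with constant `K`: it is uniformly recurrent and two
successive occurrences of any nonempty factor `u` differ by at most `K * |u|`. -/
def LinRec {A : Type*} (K : ℕ) (x : ℕ → A) : Prop :=
  UnifRec x ∧ ∀ u : List A, u ≠ [] → IsFactor x u →
    ∀ i, occursAt x u i → ∃ j, i < j ∧ j ≤ i + K * u.length ∧ occursAt x u j

/-- `σ` is prolongable on the letter `a`. -/
def Prolongable {A : Type*} (σ : A → List A) (a : A) : Prop :=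
  (∃ t, σ a = a :: t ∧ t ≠ []) ∧
    Filter.Tendsto (fun n => (morphIter σ n [a]).length) Filter.atTop Filter.atTop

/-- `σ` is growing: the image of each letter has length tending to infinity. -/
def Growing {A : Type*} (σ : A → List A) : Prop :=
  ∀ a, Filter.Tendsto (fun n => (morphIter σ n [a]).length) Filter.atTop Filter.atTop

/-- `σ` is primitive: some power sends every letter to a word containing every letter. -/
def Primitive {A : Type*} (σ : A → List A) : Prop :=
  ∃ n > 0, ∀ a b : A, b ∈ morphIter σ n [a]

/-- `x` is the fixed point `σ^∞(a)` of `σ`, prolongable on `a`. -/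
def IsFixedPointOf {A : Type*} (σ : A → List A) (a : A) (x : ℕ → A) : Prop :=
  x 0 = a ∧ ∀ n, IsPrefixSeq (morphIter σ n [a]) x

/-- The word `w` belongs to the language of the endomorphism `σ`. -/
def InLang {A : Type*} (σ : A → List A) (w : List A) : Prop :=
  ∃ a n, w <:+: morphIter σ n [a]

/-- The word `u` occurs at position `i` in the word `w`. -/
def listOccursAt {A : Type*} (w u : List A) (i : ℕ) : Prop :=
  i + u.length ≤ w.length ∧ (w.drop i).take u.length = u

/-- `|σ^k|`: the maximal length of the image of a letter under `σ^k`. -/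
def maxLen {A : Type*} [Fintype A] [Nonempty A] (σ : A → List A) (k : ℕ) : ℕ :=
  Finset.univ.sup' Finset.univ_nonempty (fun a => (morphIter σ k [a]).length)

/-- `⟨σ^k⟩`: the minimal length of the image of a letter under `σ^k`. -/
def minLen {A : Type*} [Fintype A] [Nonempty A] (σ : A → List A) (k : ℕ) : ℕ :=
  Finset.univ.inf' Finset.univ_nonempty (fun a => (morphIter σ k [a]).length)

/-- `(R, θ, z)` is the derived-sequence data of `x` on the prefix `u`: `θ 0, …, θ (R-1)`
enumerate the return words to `u` in order of first appearance in `x`, `z` is the derived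
sequence, i.e. the coding of the decomposition of `x` into return words to `u`,
so that `Θ_{x,u}(z) = x`. -/
def IsDerivedSeq {A : Type*} (x : ℕ → A) (u : List A) (R : ℕ)
    (θ : ℕ → List A) (z : ℕ → ℕ) : Prop :=
  (∀ i < R, IsReturnWord x u (θ i)) ∧
  (∀ w, IsReturnWord x u w → ∃ i < R, θ i = w) ∧
  (∀ i < R, ∀ j < R, i < j →
      sInf {k | occursAt x (θ i) k} < sInf {k | occursAt x (θ j) k}) ∧
  (∀ k, z k < R) ∧
  (∀ n, IsPrefixSeq (morphApply θ (seqWord z 0 n)) x)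

section

variable {A : Type*}

theorem seqWord_add (x : ℕ → A) (i m n : ℕ) :
    seqWord x i (m + n) = seqWord x i m ++ seqWord x (i + m) n := by
  simp only [seqWord, List.range_add, List.map_append, List.map_map]
  congr 1
  exact List.map_congr_left fun k _ => by simp [Nat.add_assoc]

theorem seqWord_sub_eq_append {x : ℕ → A} {i k j : ℕ} (hik : i ≤ k) (hkj : k ≤ j) :
    seqWord x i (j - i) = seqWord x i (k - i) ++ seqWord x k (j - k) := by
  rw [show j - i = (k - i) + (j - k) by omega, seqWord_add, Nat.add_sub_cancel' hik]

theorem occursAt_of_isPrefix (x : ℕ → A) {u v : List A} (huv : u <+: v) {i : ℕ}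
    (h : occursAt x v i) : occursAt x u i := by
  obtain ⟨t, rfl⟩ := huv
  unfold occursAt at h ⊢
  rw [List.length_append, seqWord_add] at h
  exact (List.append_inj h (by simp [seqWord])).1

theorem exists_returnWords_flatten_eq_seqWord (x : ℕ → A) (u : List A) {i j : ℕ}
    (hij : i ≤ j) (hi : occursAt x u i) (hj : occursAt x u j) :
    ∃ l : List (List A), (∀ p ∈ l, IsReturnWord x u p) ∧ l.flatten = seqWord x i (j - i) := by
  classical
  induction j using Nat.strong_induction_on with
  | _ j ih =>
  rcases hij.eq_or_lt with rfl | hlt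
  · exact ⟨[], by simp, by simp [seqWord]⟩
  set k := Nat.findGreatest (occursAt x u) (j - 1)
  have hik : i ≤ k := Nat.le_findGreatest (by omega) hi
  have hkj : k < j := by have := Nat.findGreatest_le (P := occursAt x u) (j - 1); omega
  have hk : occursAt x u k := Nat.findGreatest_spec (m := i) (by omega) hi
  have hret : IsReturnWord x u (seqWord x k (j - k)) :=
    ⟨k, j, hkj, hk, hj, fun m hkm hmj => Nat.findGreatest_is_greatest hkm (by omega), rfl⟩
  obtain ⟨l, hl, hflat⟩ := ih k hkj hik hk
  refine ⟨l ++ [seqWord x k (j - k)], ?_, ?_⟩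
  · simpa [or_imp, forall_and] using ⟨hl, hret⟩
  · rw [List.flatten_append, hflat, seqWord_sub_eq_append hik hkj.le, List.flatten_singleton]

end

theorem returnWord_concat_of_prefix_general {A : Type*} (x : ℕ → A)
    (u v : List A) (huv : u <+: v) :
    ∀ w, IsReturnWord x v w →
      ∃ l : List (List A), (∀ p ∈ l, IsReturnWord x u p) ∧ l.flatten = w := by
  rintro w ⟨i, j, hij, hvi, hvj, -, rfl⟩
  exact exists_returnWords_flatten_eq_seqWord x u hij.le
    (occursAt_of_isPrefix x huv hvi) (occursAt_of_isPrefix x huv hvj)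

/-- Proposition (Durand 1998): if `x` is uniformly recurrent and `u`, `v` are prefixes
of `x` with `u` a (non-empty) prefix of `v`, then every return word to `v` is a
concatenation of return words to `u`. -/
theorem returnWord_concat_of_prefix {A : Type*} [Fintype A] (x : ℕ → A)
    (hur : UnifRec x) (u v : List A) (hu : u ≠ [])
    (hup : IsPrefixSeq u x) (hvp : IsPrefixSeq v x) (huv : u <+: v) :
    ∀ w, IsReturnWord x v w →
      ∃ l : List (List A), (∀ p ∈ l, IsReturnWord x u p) ∧ l.flatten = w :=
  returnWord_concat_of_prefix_general x u v huv
end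

section
/- Let σ be a primitive substitution on an alphabet of d letters, prolongable on the letter a. Then the maximal gap R_σ between two successive occurrences of any length-2 word of the language of σ in any word of the language is at most 2·|σ^{2d²}|. -/
/-!
A word of length two of the language occurs in some `σ^n(c)` with `n ≤ d² + d`: desubstituting
it `n` times gives a chain of words of length at most two, and a repetition in that chain would
give a smaller depth. Primitivity, together with the letter `a ∈ σ(a)`, puts every letter into
`σ^k(b)` for all letters `b` and all `k ≥ 2d - 2`, because the letters of `σ^k(a)`, and the
letters `b` with `a ∈ σ^k(b)`, form increasing chains of subsets of the alphabet which stabilise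
within `d - 1` steps. So every length-two word of the language lies in every block `σ^{2d²}(b)`.
A word of the language is a factor of a concatenation of such blocks, each of length at most
`|σ^{2d²}|`, and any window of twice that length covers a whole block, hence an occurrence.
-/

section Morphism

variable {I A : Type*}

@[simp] theorem morphApply_nil (θ : I → List A) : morphApply θ [] = [] := rfl

@[simp] theorem morphApply_cons (θ : I → List A) (b : I) (l : List I) :
    morphApply θ (b :: l) = θ b ++ morphApply θ l := by
  simp [morphApply]

@[simp] theorem morphApply_singleton (θ : I → List A) (b : I) : morphApply θ [b] = θ b := by
  simp [morphApply]

theorem mem_morphApply {θ : I → List A} {l : List I} {c : A} :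
    c ∈ morphApply θ l ↔ ∃ b ∈ l, c ∈ θ b := by
  simp [morphApply]

theorem List.IsInfix.morphApply {l₁ l₂ : List I} (h : l₁ <:+: l₂) (θ : I → List A) :
    _root_.morphApply θ l₁ <:+: _root_.morphApply θ l₂ := by
  simpa only [_root_.morphApply, ← List.flatMap_def] using h.flatMap θ

end Morphism

section Iterate

variable {A : Type*} (σ : A → List A)

theorem morphIter_eq_iterate (n : ℕ) : morphIter σ n = (morphApply σ)^[n] := by
  induction n with
  | zero => rfl
  | succ n ih => funext l; rw [Function.iterate_succ_apply', ← ih]; rfl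

theorem morphIter_add (m n : ℕ) (l : List A) :
    morphIter σ (m + n) l = morphIter σ m (morphIter σ n l) := by
  simp only [morphIter_eq_iterate, Function.iterate_add_apply]

theorem morphIter_succ' (n : ℕ) (l : List A) :
    morphIter σ (n + 1) l = morphIter σ n (morphApply σ l) := by
  simp only [morphIter_eq_iterate, Function.iterate_succ_apply]

@[simp] theorem morphIter_nil (n : ℕ) : morphIter σ n [] = [] := by
  induction n with
  | zero => rfl
  | succ n ih => rw [morphIter_succ', morphApply_nil, ih]

theorem morphIter_append (n : ℕ) (l₁ l₂ : List A) :
    morphIter σ n (l₁ ++ l₂) = morphIter σ n l₁ ++ morphIter σ n l₂ := by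
  induction n with
  | zero => rfl
  | succ n ih => simp [morphIter, ih, morphApply]

theorem morphIter_eq_morphApply (n : ℕ) (l : List A) :
    morphIter σ n l = morphApply (fun b => morphIter σ n [b]) l := by
  induction l with
  | nil => simp
  | cons b l ih => rw [morphApply_cons, ← ih, ← morphIter_append, List.singleton_append]

variable {σ}

theorem List.IsInfix.morphIter {l₁ l₂ : List A} (h : l₁ <:+: l₂) (n : ℕ) :
    _root_.morphIter σ n l₁ <:+: _root_.morphIter σ n l₂ := by
  induction n with
  | zero => exact h
  | succ n ih => exact ih.morphApply σ

theorem infix_morphIter_of_mem {b c : A} {m : ℕ} (h : c ∈ morphIter σ m [b]) (n : ℕ) :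
    morphIter σ n [c] <:+: morphIter σ (n + m) [b] := by
  rw [morphIter_add]
  exact ((List.singleton_infix_iff c _).2 h).morphIter n

end Iterate

theorem Finset.eq_univ_of_card_sub_one_le {α : Type*} [Fintype α] {F : ℕ → Finset α}
    {g : Finset α → Finset α} (hF : ∀ k, F (k + 1) = g (F k)) (hmono : Monotone F)
    (h0 : (F 0).Nonempty) (huniv : ∃ p, F p = Finset.univ) {n : ℕ}
    (hn : Fintype.card α - 1 ≤ n) : F n = Finset.univ := by
  have hstable : ∀ k, F (k + 1) = F k → ∀ m, F (k + m) = F k := by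
    intro k hk m
    induction m with
    | zero => rfl
    | succ m ih => rw [← add_assoc, hF, ih, ← hF, hk]
  by_cases hstuck : ∃ k ≤ n, F (k + 1) = F k
  · obtain ⟨k, hkn, hk⟩ := hstuck
    obtain ⟨p, hp⟩ := huniv
    have hkp : F k = Finset.univ := by
      rw [← hstable k hk p, ← Finset.univ_subset_iff, ← hp]
      exact hmono (Nat.le_add_left p k)
    rw [← Finset.univ_subset_iff, ← hkp]
    exact hmono hkn
  · push Not at hstuck
    have hcard : ∀ k ≤ n, k + 1 ≤ (F k).card := by
      intro k hk
      induction k with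
      | zero => exact h0.card_pos
      | succ k ih =>
        have hlt : F k ⊂ F (k + 1) :=
          (hmono (Nat.le_succ k)).ssubset_of_ne (hstuck k (by omega)).symm
        have := Finset.card_lt_card hlt
        omega
    have := hcard n le_rfl
    exact Finset.eq_univ_of_card _ ((Finset.card_le_univ _).antisymm (by omega))

section Primitive

variable {A : Type*} {σ : A → List A}

theorem Primitive.ne_nil (hprim : Primitive σ) (b : A) : σ b ≠ [] := by
  obtain ⟨p, hp, hmem⟩ := hprim
  obtain ⟨k, rfl⟩ := Nat.exists_eq_add_of_le' hp
  intro hb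
  simpa [morphIter_succ', morphApply, hb] using hmem b b

variable [Fintype A] {a : A}

theorem mem_morphIter_of_self_mem (hprim : Primitive σ) (ha : a ∈ σ a) {k : ℕ}
    (hk : Fintype.card A - 1 ≤ k) (c : A) : c ∈ morphIter σ k [a] := by
  classical
  let F : ℕ → Finset A := fun k => (morphIter σ k [a]).toFinset
  let g : Finset A → Finset A := fun T => T.biUnion fun x => (σ x).toFinset
  have hF : ∀ k, F (k + 1) = g (F k) := by
    intro k; ext x; simp [F, g, morphIter, mem_morphApply]
  have hmono : Monotone F := monotone_nat_of_le_succ fun k x hx => by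
    simp only [F, List.mem_toFinset, morphIter_succ', morphApply_singleton,
      morphIter_eq_morphApply σ k (σ a), mem_morphApply] at hx ⊢
    exact ⟨a, ha, hx⟩
  have huniv : ∃ p, F p = Finset.univ := by
    obtain ⟨p, -, hp⟩ := hprim
    exact ⟨p, Finset.eq_univ_iff_forall.2 fun c => List.mem_toFinset.2 (hp a c)⟩
  have hFk := Finset.eq_univ_of_card_sub_one_le hF hmono ⟨a, by simp [F, morphIter]⟩ huniv hk
  simpa [F] using Finset.eq_univ_iff_forall.1 hFk c

theorem self_mem_morphIter_of_self_mem (hprim : Primitive σ) (ha : a ∈ σ a) {k : ℕ}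
    (hk : Fintype.card A - 1 ≤ k) (b : A) : a ∈ morphIter σ k [b] := by
  classical
  let F : ℕ → Finset A := fun k => {b | a ∈ morphIter σ k [b]}
  let g : Finset A → Finset A := fun T => {b | ∃ x ∈ σ b, x ∈ T}
  have hF : ∀ k, F (k + 1) = g (F k) := by
    intro k; ext b
    simp [F, g, morphIter_succ', morphIter_eq_morphApply σ k (σ b), mem_morphApply]
  have hmono : Monotone F := monotone_nat_of_le_succ fun k b hb => by
    simp only [F, Finset.mem_filter_univ, morphIter, mem_morphApply] at hb ⊢
    exact ⟨a, hb, ha⟩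
  have huniv : ∃ p, F p = Finset.univ := by
    obtain ⟨p, -, hp⟩ := hprim
    exact ⟨p, Finset.eq_univ_iff_forall.2 fun b => by simpa [F] using hp b a⟩
  have hFk := Finset.eq_univ_of_card_sub_one_le hF hmono ⟨a, by simp [F, morphIter]⟩ huniv hk
  simpa [F] using Finset.eq_univ_iff_forall.1 hFk b

theorem mem_morphIter_of_primitive (hprim : Primitive σ) (ha : a ∈ σ a) {k : ℕ}
    (hk : 2 * Fintype.card A - 2 ≤ k) (b c : A) : c ∈ morphIter σ k [b] := by
  have hca := mem_morphIter_of_self_mem hprim ha (k := k - (Fintype.card A - 1)) (by omega) c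
  have hab := self_mem_morphIter_of_self_mem hprim ha le_rfl b
  rw [← Nat.sub_add_cancel (by omega : Fintype.card A - 1 ≤ k)]
  exact (infix_morphIter_of_mem hab _).subset hca

end Primitive

def wordsLengthLeTwo (A : Type*) [Fintype A] [DecidableEq A] : Finset (List A) :=
  insert [] <|
    Finset.univ.image (fun x : A => [x]) ∪ Finset.univ.image fun p : A × A => [p.1, p.2]

theorem mem_wordsLengthLeTwo {A : Type*} [Fintype A] [DecidableEq A] {l : List A}
    (hl : l.length ≤ 2) : l ∈ wordsLengthLeTwo A := by
  rcases l with _ | ⟨x, _ | ⟨y, _ | ⟨z, l⟩⟩⟩ <;> simp_all [wordsLengthLeTwo]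

theorem card_wordsLengthLeTwo_le (A : Type*) [Fintype A] [DecidableEq A] :
    (wordsLengthLeTwo A).card ≤ Fintype.card A ^ 2 + Fintype.card A + 1 := by
  calc (wordsLengthLeTwo A).card
      ≤ (Finset.univ.image (fun x : A => [x])).card
        + (Finset.univ.image fun p : A × A => [p.1, p.2]).card + 1 :=
        (Finset.card_insert_le _ _).trans (Nat.add_le_add_right (Finset.card_union_le _ _) 1)
    _ ≤ Fintype.card A + Fintype.card (A × A) + 1 := by
        gcongr <;> exact Finset.card_image_le
    _ = Fintype.card A ^ 2 + Fintype.card A + 1 := by rw [Fintype.card_prod]; ring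

section Desubstitution

variable {I A : Type*}

theorem exists_short_infix_of_infix_morphApply {θ : I → List A} (hθ : ∀ b, θ b ≠ [])
    {u : List A} (hu : u.length ≤ 2) {v : List I} (h : u <:+: morphApply θ v) :
    ∃ z, z <:+: v ∧ z.length ≤ 2 ∧ u <:+: morphApply θ z := by
  induction v with
  | nil => exact ⟨[], List.infix_refl _, by simp, h⟩
  | cons b v ih =>
    have hbv : [b] <:+: b :: v := (List.singleton_infix_iff b _).2 List.mem_cons_self
    rw [morphApply_cons, List.infix_append_iff] at h
    rcases h with h | h | ⟨x, y, rfl, hx, hy⟩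
    · exact ⟨[b], hbv, by simp, by simpa using h⟩
    · obtain ⟨z, hz, hz2, hzu⟩ := ih h
      exact ⟨z, hz.trans (List.suffix_cons b v).isInfix, hz2, hzu⟩
    · rcases y with _ | ⟨y, _ | ⟨y', t⟩⟩
      · exact ⟨[b], hbv, by simp, by simpa using hx.isInfix⟩
      · obtain ⟨b', v', rfl⟩ :=
          List.exists_cons_of_ne_nil fun hv : v = [] => by simp [hv] at hy
        have hy' : [y] <+: θ b' := List.prefix_of_prefix_length_le (by simpa using hy)
          (List.prefix_append _ _) (List.length_pos_iff.2 (hθ b'))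
        obtain ⟨s, hs⟩ := hx
        obtain ⟨t, ht⟩ := hy'
        refine ⟨[b, b'], (List.prefix_append [b, b'] v').isInfix, by simp, s, t, ?_⟩
        simp [← hs, ← ht]
      · obtain ⟨rfl⟩ : x = [] := List.eq_nil_of_length_eq_zero (by simp at hu; omega)
        obtain ⟨z, hz, hz2, hzu⟩ := ih hy.isInfix
        exact ⟨z, hz.trans (List.suffix_cons b v).isInfix, hz2, hzu⟩

theorem exists_short_infix_of_infix_morphIter {σ : A → List A} (hσ : ∀ b, σ b ≠ [])
    {u : List A} (hu : u.length ≤ 2) (n : ℕ) {v : List A} (h : u <:+: morphIter σ n v) :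
    ∃ z, z <:+: v ∧ z.length ≤ 2 ∧ u <:+: morphIter σ n z := by
  induction n generalizing v with
  | zero => exact ⟨u, h, hu, List.infix_refl u⟩
  | succ n ih =>
    rw [morphIter_succ'] at h
    obtain ⟨z', hz', hz'2, hz'u⟩ := ih h
    obtain ⟨z, hz, hz2, hzz'⟩ := exists_short_infix_of_infix_morphApply hσ hz'2 hz'
    exact ⟨z, hz, hz2, by simpa only [morphIter_succ'] using hz'u.trans (hzz'.morphIter n)⟩

theorem exists_infix_morphIter_le_of_inLang [Fintype A] {σ : A → List A}
    (hσ : ∀ b, σ b ≠ []) {u : List A} (hu : u.length ≤ 2) (hL : InLang σ u) :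
    ∃ n ≤ Fintype.card A ^ 2 + Fintype.card A, ∃ c, u <:+: morphIter σ n [c] := by
  classical
  have hex : ∃ n c, u <:+: morphIter σ n [c] := let ⟨c, n, h⟩ := hL; ⟨n, c, h⟩
  obtain ⟨c, hc⟩ := Nat.find_spec hex
  set n₀ := Nat.find hex
  refine ⟨n₀, ?_, c, hc⟩
  by_contra! hbig
  have hchain : ∀ m ≤ n₀, ∃ z, z <:+: morphIter σ (n₀ - m) [c] ∧ z.length ≤ 2 ∧
      u <:+: morphIter σ m z := fun m hm => by
    refine exists_short_infix_of_infix_morphIter hσ hu m ?_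
    rwa [← morphIter_add, Nat.add_sub_cancel' hm]
  choose! z hzc hz2 hzu using hchain
  -- a repetition `z m₁ = z m₂`, `m₁ < m₂`, would let `u` occur at depth `n₀ - (m₂ - m₁)`
  have hinj : ∀ m₁ m₂, m₁ < m₂ → m₂ ≤ n₀ → z m₁ ≠ z m₂ := by
    intro m₁ m₂ hlt hm₂ heq
    refine Nat.find_min hex (m := m₁ + (n₀ - m₂)) (by omega) ⟨c, ?_⟩
    rw [morphIter_add]
    exact (heq ▸ hzu m₁ (by omega)).trans ((hzc m₂ hm₂).morphIter m₁)
  obtain ⟨m₁, hm₁, m₂, hm₂, hne, heq⟩ := Finset.exists_ne_map_eq_of_card_lt_of_maps_to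
    (s := Finset.range (n₀ + 1)) (t := wordsLengthLeTwo A)
    (by have := card_wordsLengthLeTwo_le A; simp only [Finset.card_range]; omega)
    (fun m hm => mem_wordsLengthLeTwo (hz2 m (by simpa [Nat.lt_succ_iff] using hm)))
  rw [Finset.mem_range] at hm₁ hm₂
  rcases hne.lt_or_gt with hlt | hlt
  · exact hinj m₁ m₂ hlt (by omega) heq
  · exact hinj m₂ m₁ hlt (by omega) heq.symm

end Desubstitution

theorem infix_morphIter_of_inLang {A : Type*} [Fintype A] {σ : A → List A} {a : A}
    (hprim : Primitive σ) (ha : a ∈ σ a) {u : List A} (hu : u.length ≤ 2) (hL : InLang σ u)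
    (b : A) : u <:+: morphIter σ (2 * Fintype.card A ^ 2) [b] := by
  obtain ⟨n, hn, c, hc⟩ := exists_infix_morphIter_le_of_inLang hprim.ne_nil hu hL
  set d := Fintype.card A
  have hd : 3 * d ≤ d ^ 2 + 2 := by
    rcases d with _ | _ | d
    · simp
    · simp
    · nlinarith
  have hcb := mem_morphIter_of_primitive hprim ha (k := 2 * d ^ 2 - n) (by omega) b c
  rw [← Nat.add_sub_cancel' (by omega : n ≤ 2 * d ^ 2)]
  exact hc.trans (infix_morphIter_of_mem hcb n)

section Occurrences

variable {I A : Type*} {w u : List A} {k : ℕ}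

theorem listOccursAt_iff : listOccursAt w u k ↔ ∃ s t, w = s ++ u ++ t ∧ s.length = k := by
  constructor
  · rintro ⟨hlen, hw⟩
    refine ⟨w.take k, (w.drop k).drop u.length, ?_, by simp; omega⟩
    conv_lhs =>
      rw [← List.take_append_drop k w, ← List.take_append_drop u.length (w.drop k), hw]
    simp
  · rintro ⟨s, t, rfl, rfl⟩
    exact ⟨by simp, by simp⟩

theorem listOccursAt_append_left (h : listOccursAt w u k) (s : List A) :
    listOccursAt (s ++ w) u (s.length + k) := by
  obtain ⟨s', t, rfl, rfl⟩ := listOccursAt_iff.1 h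
  exact listOccursAt_iff.2 ⟨s ++ s', t, by simp, by simp⟩

theorem listOccursAt_append_right (h : listOccursAt w u k) (t : List A) :
    listOccursAt (w ++ t) u k := by
  obtain ⟨s, t', rfl, rfl⟩ := listOccursAt_iff.1 h
  exact listOccursAt_iff.2 ⟨s, t' ++ t, by simp, rfl⟩

theorem listOccursAt_of_append {s t : List A} (h : listOccursAt (s ++ w ++ t) u (s.length + k))
    (hk : k + u.length ≤ w.length) : listOccursAt w u k := by
  refine ⟨hk, ?_⟩
  have := h.2
  rwa [List.append_assoc, List.drop_length_add_append, List.drop_append_of_le_length (by omega),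
    List.take_append_of_le_length (by simp; omega)] at this

/-- Blocks have length at most `L`, so a window of length `2 * L` covers a complete block. -/
theorem exists_listOccursAt_morphApply {θ : I → List A} {L : ℕ} (hu : ∀ b, u <:+: θ b)
    (hL : ∀ b, (θ b).length ≤ L) (y : List I) {P : ℕ}
    (hP : P + 2 * L < (morphApply θ y).length) :
    ∃ k, P ≤ k ∧ k + u.length ≤ P + 2 * L ∧ listOccursAt (morphApply θ y) u k := by
  induction y generalizing P with
  | nil => simp at hP
  | cons b y ih =>
    rw [morphApply_cons, List.length_append] at hP
    rw [morphApply_cons]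
    by_cases hb : (θ b).length ≤ P
    · obtain ⟨k, hPk, hkP, hk⟩ := ih (P := P - (θ b).length) (by omega)
      exact ⟨(θ b).length + k, by omega, by omega, listOccursAt_append_left hk (θ b)⟩
    · obtain ⟨b', y, rfl⟩ := List.exists_cons_of_ne_nil fun hy : y = [] => by
        have := hL b
        simp [hy] at hP
        omega
      obtain ⟨s, t, hst⟩ := hu b'
      have hlen := congrArg List.length hst
      have := hL b; have := hL b'
      simp only [List.length_append] at hlen
      refine ⟨(θ b).length + s.length, by omega, by omega, ?_⟩
      rw [morphApply_cons, ← hst]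
      exact listOccursAt_append_left
        (listOccursAt_append_right (listOccursAt_iff.2 ⟨s, t, rfl, rfl⟩) _) _

theorem exists_listOccursAt_of_infix_morphApply {θ : I → List A} {L : ℕ}
    (hu : ∀ b, u <:+: θ b) (hL : ∀ b, (θ b).length ≤ L) {y : List I}
    (hw : w <:+: morphApply θ y) {P : ℕ} (hP : P + 2 * L < w.length) :
    ∃ k, P ≤ k ∧ k + u.length ≤ P + 2 * L ∧ listOccursAt w u k := by
  obtain ⟨s, t, hst⟩ := hw
  have hlen := congrArg List.length hst
  simp only [List.length_append] at hlen
  obtain ⟨k, hPk, hkP, hk⟩ :=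
    exists_listOccursAt_morphApply hu hL y (P := s.length + P) (by omega)
  refine ⟨k - s.length, by omega, by omega,
    listOccursAt_of_append (s := s) (t := t) ?_ (by omega)⟩
  rwa [Nat.add_sub_cancel' (by omega), hst]

end Occurrences

theorem le_maxLen {A : Type*} [Fintype A] [Nonempty A] (σ : A → List A) (k : ℕ) (b : A) :
    (morphIter σ k [b]).length ≤ maxLen σ k :=
  Finset.le_sup' (fun b => (morphIter σ k [b]).length) (Finset.mem_univ b)

theorem gap_bound_length_two_general {A : Type*} [Fintype A] [Nonempty A]
    (σ : A → List A) (a : A)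
    (hprim : Primitive σ) (hprol : Prolongable σ a) :
    ∀ w u : List A, InLang σ w → InLang σ u → u.length = 2 →
      ∀ i j, listOccursAt w u i → listOccursAt w u j → i < j →
        (∀ k, i < k → k < j → ¬ listOccursAt w u k) →
        j - i ≤ 2 * maxLen σ (2 * (Fintype.card A) ^ 2) := by
  intro w u hw hu hu2 i j _ hj _ hno
  set N := 2 * Fintype.card A ^ 2
  have ha : a ∈ σ a := by
    obtain ⟨⟨t, ht, -⟩, -⟩ := hprol
    simp [ht]
  obtain ⟨c, n, hwc⟩ := hw
  have hca : c ∈ morphIter σ N [a] := mem_morphIter_of_primitive hprim ha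
    (by have := Nat.le_self_pow two_ne_zero (Fintype.card A); omega) a c
  have hwX : w <:+: morphApply (fun b => morphIter σ N [b]) (morphIter σ n [a]) := by
    rw [← morphIter_eq_morphApply, ← morphIter_add, add_comm]
    exact hwc.trans (infix_morphIter_of_mem hca n)
  by_contra! hgap
  obtain ⟨k, hik, hkj, hk⟩ := exists_listOccursAt_of_infix_morphApply
    (fun b => infix_morphIter_of_inLang hprim ha hu2.le hu b) (le_maxLen σ N) hwX
    (P := i + 1) (by have := hj.1; omega)
  exact hno k (by omega) (by omega) hk

/-- Lemma: if `σ` is a primitive substitution on an alphabet of `d` letters, prolongable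
on `a`, then the maximal gap `R_σ` between two successive occurrences of any length-2 word
of the language of `σ` in any word of the language is at most `2·|σ^{2d²}|`. -/
theorem gap_bound_length_two {A : Type*} [Fintype A] [Nonempty A]
    (σ : A → List A) (a : A)
    (hprim : Primitive σ) (hgrow : Growing σ) (hprol : Prolongable σ a) :
    ∀ w u : List A, InLang σ w → InLang σ u → u.length = 2 →
      ∀ i j, listOccursAt w u i → listOccursAt w u j → i < j →
        (∀ k, i < k → k < j → ¬ listOccursAt w u k) →
        j - i ≤ 2 * maxLen σ (2 * (Fintype.card A) ^ 2) :=
  gap_bound_length_two_general σ a hprim hprol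
end

section
/- Let x be a non-periodic linearly recurrent sequence with constant K and u a factor of x. Then every return word v to u in x satisfies |u|/K ≤ |v| ≤ K·|u|. -/
/-! If two occurrences of `u` are `g < |u|/K` apart, `x` has period `g` on a stretch of length
`|u| > K·g` starting there. Let `m` be the first position after it where the period `g` breaks.
Sliding a length-`g` window one step preserves its multiset of letters exactly when the period
holds at that step, so the windows at `m` and `m + 1` have different multisets. But uniform
recurrence provides a later copy of the periodic stretch, and linear recurrence puts an occurrence
of the window at `m + 1` within `K·g` of that copy's start, i.e. inside it; sliding back through
periodic stretches, that window has the same multiset of letters as the window at `m`. -/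

section Windows

variable {A : Type*} {x : ℕ → A}

@[simp]
lemma seqWord_length (x : ℕ → A) (i n : ℕ) : (seqWord x i n).length = n := by
  simp [seqWord]

lemma seqWord_succ (x : ℕ → A) (a n : ℕ) :
    seqWord x a (n + 1) = seqWord x a n ++ [x (a + n)] := by
  simp [seqWord, List.range_succ]

lemma seqWord_succ' (x : ℕ → A) (a n : ℕ) :
    seqWord x a (n + 1) = x a :: seqWord x (a + 1) n := by
  simp only [seqWord, List.range_succ_eq_map, List.map_cons, List.map_map, Nat.add_zero]
  congr 1
  exact List.map_congr_left fun k _ => congrArg x (by omega)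

lemma seqWord_eq_seqWord_iff {a b n : ℕ} :
    seqWord x a n = seqWord x b n ↔ ∀ t < n, x (a + t) = x (b + t) := by
  unfold seqWord
  rw [List.map_inj_left]
  simp

lemma occursAt_seqWord (x : ℕ → A) (a n : ℕ) : occursAt x (seqWord x a n) a := by
  rw [occursAt, seqWord_length]

lemma apply_add_eq_of_occursAt {u : List A} {a b t : ℕ} (ha : occursAt x u a)
    (hb : occursAt x u b) (ht : t < u.length) : x (a + t) = x (b + t) :=
  seqWord_eq_seqWord_iff.mp (ha.trans hb.symm) t ht

lemma seqWord_perm_succ_iff {g : ℕ} (hg : 0 < g) (a : ℕ) :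
    (seqWord x a g).Perm (seqWord x (a + 1) g) ↔ x (a + g) = x a := by
  obtain ⟨g, rfl⟩ := Nat.exists_eq_add_one_of_ne_zero hg.ne'
  rw [seqWord_succ', seqWord_succ, show a + 1 + g = a + (g + 1) by omega]
  constructor
  · intro h
    have h' := h.trans (List.perm_append_singleton _ _)
    exact (List.singleton_perm_singleton.mp ((List.perm_append_right_iff _).mp h')).symm
  · intro h
    rw [h]
    exact (List.perm_append_singleton _ _).symm

lemma seqWord_perm_of_periodicOn {g a b : ℕ} (hg : 0 < g) (hab : a ≤ b)
    (hper : ∀ k, a ≤ k → k < b → x (k + g) = x k) :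
    (seqWord x a g).Perm (seqWord x b g) := by
  induction b, hab using Nat.le_induction with
  | base => rfl
  | succ b hab ih =>
    exact (ih fun k hk hkb => hper k hk (by omega)).trans
      ((seqWord_perm_succ_iff hg b).mpr (hper b hab (by omega)))

end Windows

section Recurrence

variable {A : Type*} {x : ℕ → A}

lemma UnifRec.exists_occursAt_ge {w : List A} (hx : UnifRec x) (hw : IsFactor x w) (n : ℕ) :
    ∃ c, n ≤ c ∧ occursAt x w c := by
  obtain ⟨C, hC⟩ := hx w hw
  obtain ⟨c, hnc, -, hc⟩ := hC n
  exact ⟨c, hnc, hc⟩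

lemma LinRec.exists_occursAt_mem_Ico {K p c : ℕ} {w : List A} (hx : LinRec K x) (hw : w ≠ [])
    (hp : occursAt x w p) (hpc : p < c) :
    ∃ j, c ≤ j ∧ j < c + K * w.length ∧ occursAt x w j := by
  classical
  set q := Nat.findGreatest (occursAt x w) (c - 1)
  have hq : occursAt x w q := Nat.findGreatest_spec (m := p) (by omega) hp
  have hqc : q ≤ c - 1 := Nat.findGreatest_le _
  obtain ⟨j, hqj, hjq, hj⟩ := hx.2 w hw ⟨p, hp⟩ q hq
  have hcj : c ≤ j := by
    by_contra! hjc
    exact Nat.findGreatest_is_greatest hqj (by omega) hj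
  exact ⟨j, hcj, by omega, hj⟩

lemma exists_first_period_break (hx : ¬ UltPeriodic x) {g : ℕ} (hg : 0 < g) (i : ℕ) :
    ∃ m, i ≤ m ∧ x (m + g) ≠ x m ∧ ∀ k, i ≤ k → k < m → x (k + g) = x k := by
  classical
  have hbreak : ∃ m, i ≤ m ∧ x (m + g) ≠ x m := by
    by_contra! hper
    exact hx ⟨g, hg, i, hper⟩
  obtain ⟨him, hm⟩ := Nat.find_spec hbreak
  refine ⟨Nat.find hbreak, him, hm, fun k hik hkm => ?_⟩
  by_contra hk
  exact Nat.find_min hbreak hkm ⟨hik, hk⟩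

theorem LinRec.length_le_mul_of_occursAt_add {K i g : ℕ} {u : List A} (hx : LinRec K x)
    (hnp : ¬ UltPeriodic x) (hi : occursAt x u i) (hig : occursAt x u (i + g)) (hg : 0 < g) :
    u.length ≤ K * g := by
  by_contra! hlt
  obtain ⟨m, him, hbreak, hmin⟩ := exists_first_period_break hnp hg i
  have hwin_m : (seqWord x i g).Perm (seqWord x m g) := seqWord_perm_of_periodicOn hg him hmin
  obtain ⟨c, hmc, hc⟩ := hx.1.exists_occursAt_ge ⟨i, occursAt_seqWord x i (g + u.length)⟩ (m + 2)
  have hcopy : ∀ s < g + u.length, x (c + s) = x (i + s) :=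
    seqWord_eq_seqWord_iff.mp (by simpa [occursAt] using hc)
  have hperc : ∀ k, c ≤ k → k < c + u.length → x (k + g) = x k := by
    intro k hck hk
    obtain ⟨t, rfl⟩ := Nat.exists_eq_add_of_le hck
    calc x (c + t + g) = x (i + g + t) := by rw [add_assoc, hcopy _ (by omega)]; ring_nf
      _ = x (i + t) := apply_add_eq_of_occursAt hig hi (by omega)
      _ = x (c + t) := (hcopy t (by omega)).symm
  obtain ⟨j, hcj, hjc, hj⟩ := hx.exists_occursAt_mem_Ico (c := c)
    (by simpa [← List.length_pos_iff] using hg) (occursAt_seqWord x (m + 1) g) (by omega)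
  have hwin_c : seqWord x c g = seqWord x i g :=
    seqWord_eq_seqWord_iff.mpr fun t ht => hcopy t (by omega)
  have hwin_j : (seqWord x c g).Perm (seqWord x j g) :=
    seqWord_perm_of_periodicOn hg hcj fun k hck hkj => hperc k hck (by simp at hjc; omega)
  have hwin_succ : (seqWord x m g).Perm (seqWord x (m + 1) g) := by
    have hj' : seqWord x j g = seqWord x (m + 1) g := by simpa [occursAt] using hj
    rw [← hj']
    exact hwin_m.symm.trans (hwin_c ▸ hwin_j)
  exact hbreak ((seqWord_perm_succ_iff hg m).mp hwin_succ)

end Recurrence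

theorem returnWord_length_bounds_general {A : Type*} (x : ℕ → A)
    (K : ℕ) (hlr : LinRec K x) (hnp : ¬ UltPeriodic x)
    (u : List A) (hu : u ≠ []) (huf : IsFactor x u) :
    ∀ v, IsReturnWord x u v → u.length ≤ K * v.length ∧ v.length ≤ K * u.length := by
  rintro v ⟨i, j, hij, hi, hj, hnext, rfl⟩
  rw [seqWord_length]
  constructor
  · exact hlr.length_le_mul_of_occursAt_add hnp hi (by rwa [Nat.add_sub_cancel' hij.le]) (by omega)
  · obtain ⟨j', hij', hj'le, hj'⟩ := hlr.2 u hu huf i hi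
    have hjj' : j ≤ j' := by
      by_contra! hj'j
      exact hnext j' hij' hj'j hj'
    omega

/-- Theorem (Durand–Host–Skau): if `x` is a non-periodic linearly recurrent sequence with
constant `K` and `u` a (non-empty) factor of `x`, then every return word `v` to `u`
satisfies `|u|/K ≤ |v| ≤ K·|u|` (the left inequality stated as `|u| ≤ K·|v|`). -/
theorem returnWord_length_bounds {A : Type*} [Fintype A] (x : ℕ → A)
    (K : ℕ) (hlr : LinRec K x) (hnp : ¬ UltPeriodic x)
    (u : List A) (hu : u ≠ []) (huf : IsFactor x u) :
    ∀ v, IsReturnWord x u v → u.length ≤ K * v.length ∧ v.length ≤ K * u.length :=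
  returnWord_length_bounds_general x K hlr hnp u hu huf
end
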